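/- arXiv:1702.02004 — 3 statements merged into one kernel-verified Lean document; each statement's English description precedes it below -/
import Mathlib

section
/- If T₁ and T₂ are reduced rooted trees (roots have at least two children), then Q(T₁) = Q(T₂) if and only if the multisets D(T₁) = {d(v) : v ∈ V(T₁)} and D(T₂) = {d(v) : v ∈ V(T₂)} are equal. -/
open Finset

/-- The q-number `[n]_q = 1 + q + ⋯ + q^{n-1}` as a rational function over ℚ. -/
noncomputable def qnum (n : ℕ) : RatFunc ℚ := ∑ i ∈ Finset.range n, RatFunc.X ^ i

/-- The q-factorial `[n]_q! = ∏_{i=1}^n [i]_q`. -/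
noncomputable def qfact (n : ℕ) : RatFunc ℚ := ∏ i ∈ Finset.range n, qnum (i + 1)

/-- The q-binomial coefficient `[m+n]_q! / ([m]_q! [n]_q!)`. -/
noncomputable def qbinom (m n : ℕ) : RatFunc ℚ := qfact (m + n) / (qfact m * qfact n)

/-- The q-multinomial coefficient of a list of nonnegative integers. -/
noncomputable def qmultinomial (l : List ℕ) : RatFunc ℚ :=
  qfact l.sum / (l.map qfact).prod

/-- Plane rooted trees: a root together with an ordered list of subtrees. -/
inductive PTree where
  | node : List PTree → PTree

namespace PTree

/-- Number of edges of a rooted tree. -/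
def edges : PTree → ℕ
  | node ts => (ts.attach.map fun t => edges t.1 + 1).sum
decreasing_by simp only [PTree.node.sizeOf_spec, Nat.add_comm 1]; exact Nat.lt_succ_of_lt (List.sizeOf_lt_of_mem t.2)

/-- Multiset of descendant counts `d(v)` over the non-root vertices of `T`. -/
def ND : PTree → Multiset ℕ
  | node ts => (ts.attach.map fun t => edges t.1 ::ₘ ND t.1).sum
decreasing_by simp only [PTree.node.sizeOf_spec, Nat.add_comm 1]; exact Nat.lt_succ_of_lt (List.sizeOf_lt_of_mem t.2)

/-- Multiset `D(T) = {d(v) : v ∈ V(T)}` of descendant counts over all vertices. -/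
def D (t : PTree) : Multiset ℕ := edges t ::ₘ ND t

/-- The plucking polynomial `Q(T) = [d(r)]_q! / ∏_{v ≠ r} [d(v)+1]_q`. -/
noncomputable def Q (t : PTree) : RatFunc ℚ :=
  qfact (edges t) / ((ND t).map fun x => qnum (x + 1)).prod

end PTree

namespace PTree
/-- A rooted tree is reduced if its root has at least two children. -/
def reduced : PTree → Prop
  | node ts => 2 ≤ ts.length
end PTree

/-!
Multiplying numerator and denominator by `(q - 1)^{d(r)}` turns the plucking polynomial into
`Q(T) = ∏_{k=1}^{d(r)} (q^k - 1) / ∏_{v ≠ r} (q^{d(v)+1} - 1)`.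
A product of polynomials `q^a - 1` with `a ≥ 1` determines the multiset of exponents: if `m` is
the largest exponent on either side of an equality of such products, a primitive `m`-th root of
unity is a root of both sides, so `m` occurs on both sides and can be cancelled.
Hence `Q(T₁) = Q(T₂)` iff
`{1, …, d(r₁)} + {d(v) + 1 : v ∈ T₂, v ≠ r₂} = {1, …, d(r₂)} + {d(v) + 1 : v ∈ T₁, v ≠ r₁}`.
In a reduced tree `d(v) + 1 < d(r)` for `v ≠ r`, so `d(r₂)` occurs on the left only if
`d(r₂) ≤ d(r₁)`; by symmetry `d(r₁) = d(r₂)`, and then the non-root parts agree.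
-/

open Polynomial

noncomputable def prodPowSubOne (M : Multiset ℕ) : ℚ[X] :=
  (M.map fun a => (X : ℚ[X]) ^ a - 1).prod

theorem prodPowSubOne_add (M N : Multiset ℕ) :
    prodPowSubOne (M + N) = prodPowSubOne M * prodPowSubOne N := by
  simp [prodPowSubOne, Multiset.prod_add]

theorem prodPowSubOne_cons (a : ℕ) (M : Multiset ℕ) :
    prodPowSubOne (a ::ₘ M) = (X ^ a - 1) * prodPowSubOne M := by
  simp [prodPowSubOne]

theorem prodPowSubOne_ne_zero {M : Multiset ℕ} (hM : ∀ a ∈ M, 0 < a) : prodPowSubOne M ≠ 0 :=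
  Multiset.prod_ne_zero fun h => by
    obtain ⟨a, ha, h0⟩ := Multiset.mem_map.1 h
    exact (monic_X_pow_sub_C (1 : ℚ) (hM a ha).ne').ne_zero (by simpa using h0)

-- A primitive `m`-th root of unity is a root of `X ^ a - 1` exactly when `m ∣ a`.
theorem exists_dvd_of_prodPowSubOne_eq {M N : Multiset ℕ} (h : prodPowSubOne M = prodPowSubOne N)
    {m : ℕ} (hm : 0 < m) (hmM : m ∈ M) : ∃ a ∈ N, m ∣ a := by
  have hζ : IsPrimitiveRoot (Complex.exp (2 * Real.pi * Complex.I / m)) m :=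
    Complex.isPrimitiveRoot_exp m hm.ne'
  have hM : aeval (Complex.exp (2 * Real.pi * Complex.I / m)) (prodPowSubOne M) = 0 := by
    rw [← Multiset.cons_erase hmM, prodPowSubOne_cons, map_mul]
    simp [hζ.pow_eq_one]
  rw [h, prodPowSubOne, map_multiset_prod, Multiset.prod_eq_zero_iff] at hM
  simp only [Multiset.map_map, Multiset.mem_map, Function.comp_apply, map_sub, map_pow, aeval_X,
    map_one, sub_eq_zero] at hM
  obtain ⟨a, ha, hζa⟩ := hM
  exact ⟨a, ha, hζ.pow_eq_one_iff_dvd a |>.1 hζa⟩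

theorem mem_of_prodPowSubOne_eq {M N : Multiset ℕ} (h : prodPowSubOne M = prodPowSubOne N)
    (hN : ∀ a ∈ N, 0 < a) {m : ℕ} (hm : 0 < m) (hmM : m ∈ M) (hNm : ∀ a ∈ N, a ≤ m) : m ∈ N := by
  obtain ⟨a, ha, hma⟩ := exists_dvd_of_prodPowSubOne_eq h hm hmM
  rwa [le_antisymm (hNm a ha) (Nat.le_of_dvd (hN a ha) hma)] at ha

theorem eq_of_prodPowSubOne_eq {M N : Multiset ℕ} (hM : ∀ a ∈ M, 0 < a) (hN : ∀ a ∈ N, 0 < a)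
    (h : prodPowSubOne M = prodPowSubOne N) : M = N := by
  induction M using Multiset.strongInductionOn generalizing N with
  | ih M ih =>
    rcases eq_or_ne (M + N) 0 with hMN | hMN
    · rw [add_eq_zero] at hMN
      rw [hMN.1, hMN.2]
    obtain ⟨m, hm, hmax⟩ := Multiset.exists_max_image id hMN
    have hpos : 0 < m := (Multiset.mem_add.1 hm).elim (hM m) (hN m)
    have hMm : ∀ a ∈ M, a ≤ m := fun a ha => hmax a (Multiset.mem_add.2 (.inl ha))
    have hNm : ∀ a ∈ N, a ≤ m := fun a ha => hmax a (Multiset.mem_add.2 (.inr ha))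
    have hmM : m ∈ M := (Multiset.mem_add.1 hm).elim id
      (mem_of_prodPowSubOne_eq h.symm hM hpos · hMm)
    have hmN : m ∈ N := mem_of_prodPowSubOne_eq h hN hpos hmM hNm
    rw [← Multiset.cons_erase hmM, ← Multiset.cons_erase hmN, prodPowSubOne_cons,
      prodPowSubOne_cons] at h
    rw [← Multiset.cons_erase hmM, ← Multiset.cons_erase hmN,
      ih _ (Multiset.erase_lt.2 hmM) (fun a ha => hM a (Multiset.mem_of_mem_erase ha))
        (fun a ha => hN a (Multiset.mem_of_mem_erase ha))
        (mul_left_cancel₀ (monic_X_pow_sub_C (1 : ℚ) hpos.ne').ne_zero (by simpa using h))]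

theorem qnum_mul_X_sub_one (n : ℕ) :
    qnum n * (RatFunc.X - 1) = algebraMap ℚ[X] (RatFunc ℚ) (X ^ n - 1) := by
  rw [← geom_sum_mul, map_mul, qnum, map_sum]
  simp [RatFunc.algebraMap_X]

theorem prod_qnum_mul_pow_card (M : Multiset ℕ) :
    (M.map qnum).prod * (RatFunc.X - 1) ^ Multiset.card M =
      algebraMap ℚ[X] (RatFunc ℚ) (prodPowSubOne M) := by
  induction M using Multiset.induction_on with
  | empty => simp [prodPowSubOne]
  | cons a M ih =>
    rw [Multiset.map_cons, Multiset.prod_cons, Multiset.card_cons, prodPowSubOne_cons, map_mul,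
      ← ih, ← qnum_mul_X_sub_one]
    ring

theorem Multiset.range_add_eq_range_add_iff {a b : ℕ} {s t : Multiset ℕ}
    (hs : ∀ d ∈ s, d + 1 < a) (ht : ∀ d ∈ t, d + 1 < b) :
    range a + t = range b + s ↔ a = b ∧ s = t := by
  -- `b - 1` lies in `range b` but, if `a < b`, neither in `range a` nor in `t`
  have le_of_range_add_eq : ∀ {a b : ℕ} {s t : Multiset ℕ}, (∀ d ∈ t, d + 1 < b) →
      range a + t = range b + s → b ≤ a := by
    intro a b s t ht h
    by_contra! hab
    have hb : b - 1 ∈ range a + t := h ▸ mem_add.2 (.inl (mem_range.2 (by omega)))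
    rcases mem_add.1 hb with hb | hb
    · exact absurd (mem_range.1 hb) (by omega)
    · exact absurd (ht _ hb) (by omega)
  refine ⟨fun h => ?_, fun ⟨hab, hst⟩ => by rw [hab, hst]⟩
  obtain rfl := le_antisymm (le_of_range_add_eq hs h.symm) (le_of_range_add_eq ht h)
  exact ⟨rfl, (add_left_cancel h).symm⟩

namespace PTree

theorem induction_on {P : PTree → Prop} (node : ∀ ts, (∀ t ∈ ts, P t) → P (node ts)) :
    ∀ t, P t
  | .node ts => node ts fun t _ => induction_on node t

theorem edges_node (ts : List PTree) : edges (node ts) = (ts.map fun t => edges t + 1).sum := by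
  rw [edges]
  simp

theorem ND_node (ts : List PTree) : ND (node ts) = (ts.map fun t => edges t ::ₘ ND t).sum := by
  rw [ND]
  simp

theorem mem_ND_node {d : ℕ} {ts : List PTree} :
    d ∈ ND (node ts) ↔ ∃ t ∈ ts, d = edges t ∨ d ∈ ND t := by
  rw [ND_node, ← Multiset.sum_coe, ← Multiset.join, Multiset.mem_join]
  simp

theorem edges_add_length_le {t : PTree} {ts : List PTree} (ht : t ∈ ts) :
    edges t + ts.length ≤ edges (node ts) := by
  rw [edges_node, List.sum_map_add, List.map_const', List.sum_replicate, smul_eq_mul, mul_one]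
  exact Nat.add_le_add_right (List.le_sum_of_mem (List.mem_map_of_mem ht)) _

theorem card_ND (t : PTree) : Multiset.card (ND t) = edges t := by
  induction t using induction_on with
  | node ts ih =>
    rw [ND_node, edges_node, ← Multiset.cardHom_apply, map_list_sum, List.map_map]
    exact congrArg List.sum (List.map_congr_left fun t ht => by simp [ih t ht])

theorem lt_edges_of_mem_ND {t : PTree} {d : ℕ} (hd : d ∈ ND t) : d < edges t := by
  induction t using induction_on generalizing d with
  | node ts ih =>
    obtain ⟨t, ht, hdt⟩ := mem_ND_node.1 hd
    have hd_le : d ≤ edges t := hdt.elim le_of_eq fun h => (ih t ht h).le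
    have := edges_add_length_le ht
    have := List.length_pos_of_mem ht
    omega

theorem add_one_lt_edges_of_mem_ND {t : PTree} (hred : reduced t) {d : ℕ} (hd : d ∈ ND t) :
    d + 1 < edges t := by
  obtain ⟨ts⟩ := t
  obtain ⟨t, ht, hdt⟩ := mem_ND_node.1 hd
  have hd_le : d ≤ edges t := hdt.elim le_of_eq fun h => (lt_edges_of_mem_ND h).le
  have := edges_add_length_le ht
  have : 2 ≤ ts.length := hred
  omega

theorem D_eq_D_iff {t₁ t₂ : PTree} : D t₁ = D t₂ ↔ edges t₁ = edges t₂ ∧ ND t₁ = ND t₂ := by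
  refine ⟨fun h => ?_, fun ⟨he, hnd⟩ => by rw [D, D, he, hnd]⟩
  have he : edges t₁ = edges t₂ := by simpa [D, card_ND] using congrArg Multiset.card h
  exact ⟨he, (Multiset.cons_inj_right _).1 (by rwa [D, D, he] at h)⟩

theorem Q_eq_div (t : PTree) :
    Q t = algebraMap ℚ[X] (RatFunc ℚ) (prodPowSubOne ((Multiset.range (edges t)).map (· + 1))) /
      algebraMap ℚ[X] (RatFunc ℚ) (prodPowSubOne ((ND t).map (· + 1))) := by
  have hX : (RatFunc.X - 1 : RatFunc ℚ) ≠ 0 := by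
    rw [← RatFunc.algebraMap_X, ← map_one (algebraMap ℚ[X] (RatFunc ℚ)), ← map_sub]
    exact RatFunc.algebraMap_ne_zero (X_sub_C_ne_zero 1)
  rw [← prod_qnum_mul_pow_card, ← prod_qnum_mul_pow_card, Multiset.card_map, Multiset.card_map,
    Multiset.card_range, card_ND, mul_div_mul_right _ _ (pow_ne_zero _ hX), Q, qfact,
    Finset.prod_eq_multiset_prod, Multiset.map_map, Multiset.map_map]
  rfl

theorem Q_eq_Q_iff {t₁ t₂ : PTree} :
    Q t₁ = Q t₂ ↔ Multiset.range (edges t₁) + ND t₂ = Multiset.range (edges t₂) + ND t₁ := by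
  have hpos (M : Multiset ℕ) : ∀ a ∈ M.map (· + 1), 0 < a := by simp
  have hden (t : PTree) : algebraMap ℚ[X] (RatFunc ℚ) (prodPowSubOne ((ND t).map (· + 1))) ≠ 0 :=
    RatFunc.algebraMap_ne_zero (prodPowSubOne_ne_zero (hpos _))
  rw [Q_eq_div, Q_eq_div, div_eq_div_iff (hden t₁) (hden t₂), ← map_mul, ← map_mul,
    (IsFractionRing.injective ℚ[X] (RatFunc ℚ)).eq_iff, ← prodPowSubOne_add, ← prodPowSubOne_add,
    ← Multiset.map_add, ← Multiset.map_add]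
  exact ⟨fun h => Multiset.map_injective (add_left_injective 1)
    (eq_of_prodPowSubOne_eq (hpos _) (hpos _) h), fun h => by rw [h]⟩

end PTree

open PTree in
/-- For reduced rooted trees (roots with at least two children), the plucking polynomials
agree iff the multisets of descendant counts agree. -/
theorem Q_eq_iff_D_eq (t₁ t₂ : PTree) (h₁ : reduced t₁) (h₂ : reduced t₂) :
    Q t₁ = Q t₂ ↔ D t₁ = D t₂ := by
  rw [Q_eq_Q_iff, D_eq_D_iff, Multiset.range_add_eq_range_add_iff
    (fun _ => add_one_lt_edges_of_mem_ND h₁) (fun _ => add_one_lt_edges_of_mem_ND h₂)]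
end

section
/- Let a₁ ≥ a₂ ≥ ⋯ ≥ a_n and b₁ ≥ b₂ ≥ ⋯ ≥ b_m be sequences of nonnegative integers with a₁ > a₂ + 1 and b₁ > b₂ + 1, n = a₁ + 1 and m = b₁ + 1. If the rational functions ∏_{i=1}^{a₁}(1−q^i) / ∏_{i=2}^{n}(1−q^{a_i+1}) and ∏_{i=1}^{b₁}(1−q^i) / ∏_{i=2}^{m}(1−q^{b_i+1}) are equal, then n = m and a_i = b_i for all i. -/
open Finset

open Polynomial

/-!
Clearing denominators turns the hypothesis into `∏_{k ∈ S} (1 - q^k) = ∏_{k ∈ T} (1 - q^k)` for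
the multisets `S = {1, …, a₁} + {b_i + 1 : i ≥ 2}` and `T = {1, …, b₁} + {a_i + 1 : i ≥ 2}`.
A primitive `d`-th root of unity is a root of such a product with multiplicity the number of
`k` divisible by `d`, and these counts determine a multiset of positive integers, so `S = T`.
Since `a_i + 1 < a₁` for `i ≥ 2`, the element `a₁ ∈ S` must come from `{1, …, b₁}`, so `a₁ ≤ b₁`
and symmetrically `a₁ = b₁`. Cancelling leaves two nonincreasing sequences with the same
multiset of values, which are therefore equal.
-/

namespace Multiset

theorem countP_dvd_eq_count_of_forall_le {U : Multiset ℕ} {M : ℕ} (hU : 0 ∉ U)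
    (hle : ∀ x ∈ U, x ≤ M) : U.countP (M ∣ ·) = U.count M := by
  refine countP_congr rfl fun x hx => propext ⟨fun hdvd => ?_, fun h => h ▸ dvd_rfl⟩
  have hx0 : x ≠ 0 := fun h => hU (h ▸ hx)
  exact le_antisymm (Nat.le_of_dvd (Nat.pos_of_ne_zero hx0) hdvd) (hle x hx)

theorem eq_of_forall_countP_dvd_eq {S T : Multiset ℕ} (hS : 0 ∉ S) (hT : 0 ∉ T)
    (h : ∀ d, 0 < d → S.countP (d ∣ ·) = T.countP (d ∣ ·)) : S = T := by
  induction S using strongInductionOn generalizing T with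
  | ih S IH =>
  rcases eq_or_ne (S + T) 0 with h0 | h0
  · exact (add_eq_zero.1 h0).1.trans (add_eq_zero.1 h0).2.symm
  obtain ⟨M, hM, hMmax⟩ := exists_max_image id h0
  have hMpos : 0 < M := Nat.pos_of_ne_zero <| by
    rintro rfl
    exact (mem_add.1 hM).elim hS hT
  -- the multiplicity of the largest element `M` is the number of elements divisible by `M`
  have hcount : S.count M = T.count M := by
    rw [← countP_dvd_eq_count_of_forall_le (M := M) hS fun x hx => hMmax x (mem_add.2 (.inl hx)),
      ← countP_dvd_eq_count_of_forall_le (M := M) hT fun x hx => hMmax x (mem_add.2 (.inr hx)),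
      h M hMpos]
  have hMST : M ∈ S ∧ M ∈ T := by
    rw [← count_pos, count_add] at hM
    rw [← count_pos, ← count_pos]
    omega
  have herase : S.erase M = T.erase M := by
    refine IH _ (erase_lt.2 hMST.1) (fun h0 => hS (mem_of_mem_erase h0))
      (fun h0 => hT (mem_of_mem_erase h0)) fun d hd => ?_
    have := h d hd
    rw [← cons_erase hMST.1, ← cons_erase hMST.2, countP_cons, countP_cons] at this
    omega
  rw [← cons_erase hMST.1, ← cons_erase hMST.2, herase]

theorem le_of_map_succ_range_add_eq {p q : ℕ} {A B : Multiset ℕ} (hA : ∀ x ∈ A, x < p)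
    (h : (range p).map (· + 1) + B = (range q).map (· + 1) + A) : p ≤ q := by
  rcases Nat.eq_zero_or_pos p with rfl | hp
  · exact Nat.zero_le q
  have hmem : p ∈ (range p).map (· + 1) + B :=
    mem_add.2 (.inl (mem_map.2 ⟨p - 1, mem_range.2 (by omega), by omega⟩))
  rw [h, mem_add, mem_map] at hmem
  rcases hmem with ⟨i, hi, rfl⟩ | hpA
  · exact mem_range.1 hi
  · exact absurd (hA p hpA) (lt_irrefl p)

theorem eq_and_eq_of_map_succ_range_add_eq {p q : ℕ} {A B : Multiset ℕ} (hA : ∀ x ∈ A, x < p)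
    (hB : ∀ x ∈ B, x < q) (h : (range p).map (· + 1) + B = (range q).map (· + 1) + A) :
    p = q ∧ A = B := by
  obtain rfl : p = q := le_antisymm (le_of_map_succ_range_add_eq hA h)
    (le_of_map_succ_range_add_eq hB h.symm)
  exact ⟨rfl, (add_left_cancel h).symm⟩

end Multiset

theorem Finset.eqOn_of_antitoneOn_of_map_eq {ι α : Type*} [LinearOrder ι] [PartialOrder α]
    {s : Finset ι} {f g : ι → α} (hf : AntitoneOn f s) (hg : AntitoneOn g s)
    (h : s.val.map f = s.val.map g) : Set.EqOn f g s := by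
  let l := s.sort (· ≤ ·)
  have hsorted : ∀ φ : ι → α, AntitoneOn φ s → (l.map φ).Pairwise (· ≥ ·) :=
    fun φ hφ => List.pairwise_map.2 <| (s.pairwise_sort (· ≤ ·)).imp_of_mem
      fun hx hy hxy => hφ ((mem_sort _).1 hx) ((mem_sort _).1 hy) hxy
  have hperm : (l.map f).Perm (l.map g) := by
    rw [← Multiset.coe_eq_coe, ← Multiset.map_coe, ← Multiset.map_coe, sort_eq]
    exact h
  exact fun x hx => List.map_inj_left.1 (hperm.eq_of_pairwise' (hsorted f hf) (hsorted g hg)) x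
    ((mem_sort _).2 hx)

namespace Polynomial

theorem prod_one_sub_X_pow_ne_zero {R : Type*} [CommRing R] [IsDomain R] {S : Multiset ℕ}
    (hS : 0 ∉ S) : (S.map fun k => (1 - X ^ k : R[X])).prod ≠ 0 := by
  refine Multiset.prod_ne_zero fun h0 => ?_
  obtain ⟨k, hk, hk0⟩ := Multiset.mem_map.1 h0
  have hk' : k ≠ 0 := fun h => hS (h ▸ hk)
  rw [← neg_sub, neg_eq_zero, ← C_1] at hk0
  exact X_pow_sub_C_ne_zero (Nat.pos_of_ne_zero hk') 1 hk0

variable {K : Type*} [Field K] [CharZero K]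

theorem rootMultiplicity_one_sub_X_pow {z : K} {d k : ℕ} (hz : IsPrimitiveRoot z d)
    (hk : k ≠ 0) : rootMultiplicity z (1 - X ^ k : K[X]) = if d ∣ k then 1 else 0 := by
  have hsep : (1 - X ^ k : K[X]).Separable := by
    rw [← neg_sub, ← neg_one_mul]
    exact Separable.unit_mul isUnit_one.neg (X_pow_sub_one_separable_iff.2 (Nat.cast_ne_zero.2 hk))
  split_ifs with hdk
  · refine le_antisymm (rootMultiplicity_le_one_of_separable hsep z) ?_
    exact (rootMultiplicity_pos hsep.ne_zero).2 (by simp [IsRoot, (hz.pow_eq_one_iff_dvd k).2 hdk])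
  · refine rootMultiplicity_eq_zero fun hroot => hdk ?_
    rw [IsRoot, eval_sub, eval_one, eval_pow, eval_X, sub_eq_zero, eq_comm] at hroot
    exact (hz.pow_eq_one_iff_dvd k).1 hroot

theorem rootMultiplicity_prod_one_sub_X_pow {z : K} {d : ℕ} (hz : IsPrimitiveRoot z d)
    {S : Multiset ℕ} (hS : 0 ∉ S) :
    rootMultiplicity z (S.map fun k => (1 - X ^ k : K[X])).prod = S.countP (d ∣ ·) := by
  induction S using Multiset.induction_on with
  | empty => simp
  | cons k S ih =>
    rw [Multiset.mem_cons, not_or] at hS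
    rw [Multiset.map_cons, Multiset.prod_cons, rootMultiplicity_mul, ih hS.2,
      rootMultiplicity_one_sub_X_pow hz (Ne.symm hS.1), Multiset.countP_cons, add_comm]
    simpa using prod_one_sub_X_pow_ne_zero (R := K) (S := k ::ₘ S) (by simp [hS.1, hS.2])

theorem eq_of_prod_one_sub_X_pow_eq {S T : Multiset ℕ} (hS : 0 ∉ S) (hT : 0 ∉ T)
    (h : (S.map fun k => (1 - X ^ k : K[X])).prod = (T.map fun k => 1 - X ^ k).prod) :
    S = T := by
  let L := AlgebraicClosure K
  have hL : (S.map fun k => (1 - X ^ k : L[X])).prod = (T.map fun k => 1 - X ^ k).prod := by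
    simpa [Polynomial.map_multiset_prod, Multiset.map_map] using
      congrArg (Polynomial.map (algebraMap K L)) h
  refine Multiset.eq_of_forall_countP_dvd_eq hS hT fun d hd => ?_
  have : NeZero (d : L) := ⟨Nat.cast_ne_zero.2 hd.ne'⟩
  obtain ⟨z, hz⟩ := HasEnoughRootsOfUnity.exists_primitiveRoot L d
  rw [← rootMultiplicity_prod_one_sub_X_pow hz hS, ← rootMultiplicity_prod_one_sub_X_pow hz hT,
    hL]

end Polynomial

namespace RatFunc

open scoped Polynomial

variable {K : Type*} [Field K] [CharZero K]

theorem add_eq_add_of_prod_one_sub_X_pow_div_eq {S₁ T₁ S₂ T₂ : Multiset ℕ}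
    (hS₁ : 0 ∉ S₁) (hT₁ : 0 ∉ T₁) (hS₂ : 0 ∉ S₂) (hT₂ : 0 ∉ T₂)
    (h : (S₁.map fun k => (1 - X ^ k : RatFunc K)).prod /
        (T₁.map fun k => 1 - X ^ k).prod =
      (S₂.map fun k => 1 - X ^ k).prod / (T₂.map fun k => 1 - X ^ k).prod) :
    S₁ + T₂ = S₂ + T₁ := by
  have hcoe : ∀ S : Multiset ℕ, (S.map fun k => (1 - X ^ k : RatFunc K)).prod =
      algebraMap K[X] (RatFunc K) (S.map fun k => (1 - Polynomial.X ^ k : K[X])).prod := by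
    intro S
    simp [map_multiset_prod, Multiset.map_map]
  have hinj : Function.Injective (algebraMap K[X] (RatFunc K)) :=
    IsFractionRing.injective K[X] (RatFunc K)
  have hne : ∀ {S : Multiset ℕ}, 0 ∉ S →
      algebraMap K[X] (RatFunc K) (S.map fun k => (1 - Polynomial.X ^ k : K[X])).prod ≠ 0 :=
    fun hS => (map_ne_zero_iff _ hinj).2 (Polynomial.prod_one_sub_X_pow_ne_zero hS)
  simp only [hcoe] at h
  rw [div_eq_div_iff (hne hT₁) (hne hT₂), ← map_mul, ← map_mul, ← Multiset.prod_add,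
    ← Multiset.prod_add, ← Multiset.map_add, ← Multiset.map_add] at h
  exact Polynomial.eq_of_prod_one_sub_X_pow_eq (by simp [hS₁, hT₂]) (by simp [hS₂, hT₁])
    (hinj h)

end RatFunc

theorem eq_of_ratfunc_eq_general (n m : ℕ) (a b : ℕ → ℕ)
    (ha : ∀ i j, i ≤ j → j < n → a j ≤ a i) (hb : ∀ i j, i ≤ j → j < m → b j ≤ b i)
    (ha1 : a 1 + 1 < a 0) (hb1 : b 1 + 1 < b 0)
    (hn : n = a 0 + 1) (hm : m = b 0 + 1)
    (heq : (∏ i ∈ Finset.range (a 0), (1 - RatFunc.X ^ (i + 1))) /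
             (∏ i ∈ Finset.Ico 1 n, (1 - RatFunc.X ^ (a i + 1))) =
           (∏ i ∈ Finset.range (b 0), ((1 : RatFunc ℚ) - RatFunc.X ^ (i + 1))) /
             (∏ i ∈ Finset.Ico 1 m, (1 - RatFunc.X ^ (b i + 1)))) :
    n = m ∧ ∀ i < n, a i = b i := by
  have hprod : ∀ (s : Finset ℕ) (e : ℕ → ℕ), ∏ i ∈ s, (1 - RatFunc.X ^ e i : RatFunc ℚ) =
      ((s.val.map e).map fun k => 1 - RatFunc.X ^ k).prod := fun s e => by
    rw [Multiset.map_map, Finset.prod_map_val]; rfl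
  simp only [hprod] at heq
  have hbound : ∀ (c : ℕ → ℕ) (N : ℕ), (∀ i j, i ≤ j → j < N → c j ≤ c i) → c 1 + 1 < c 0 →
      ∀ x ∈ (Ico 1 N).val.map (c · + 1), x < c 0 := by
    intro c N hc hc1 x hx
    obtain ⟨i, hi, rfl⟩ := Multiset.mem_map.1 hx
    rw [Finset.mem_val, Finset.mem_Ico] at hi
    have := hc 1 i hi.1 hi.2
    omega
  obtain ⟨hab0, hab⟩ := Multiset.eq_and_eq_of_map_succ_range_add_eq
    (hbound a n ha ha1) (hbound b m hb hb1)
    (RatFunc.add_eq_add_of_prod_one_sub_X_pow_div_eq (by simp) (by simp) (by simp)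
      (by simp) heq)
  obtain rfl : n = m := by omega
  have hanti : ∀ c : ℕ → ℕ, (∀ i j, i ≤ j → j < n → c j ≤ c i) →
      AntitoneOn (c · + 1) (Ico 1 n : Set ℕ) := fun c hc i _ j hj hij =>
    Nat.add_le_add_right (hc i j hij (Finset.mem_Ico.1 hj).2) 1
  have htail := Finset.eqOn_of_antitoneOn_of_map_eq (hanti a ha) (hanti b hb) hab
  refine ⟨rfl, fun i hi => ?_⟩
  rcases Nat.eq_zero_or_pos i with rfl | hi0
  · exact hab0
  · exact Nat.add_right_cancel (htail (Finset.mem_Ico.2 ⟨hi0, hi⟩))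

/-- If `a₁ ≥ ⋯ ≥ a_n`, `b₁ ≥ ⋯ ≥ b_m` are nonnegative integers (here 0-indexed) with
`a₁ > a₂ + 1`, `b₁ > b₂ + 1`, `n = a₁ + 1`, `m = b₁ + 1`, and
`∏_{i=1}^{a₁}(1−q^i)/∏_{i=2}^{n}(1−q^{a_i+1}) = ∏_{i=1}^{b₁}(1−q^i)/∏_{i=2}^{m}(1−q^{b_i+1})`
as rational functions, then `n = m` and `a_i = b_i` for all `i`. -/
theorem eq_of_ratfunc_eq (n m : ℕ) (a b : ℕ → ℕ)
    (ha : ∀ i j, i ≤ j → j < n → a j ≤ a i) (hb : ∀ i j, i ≤ j → j < m → b j ≤ b i)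
    (hn2 : 2 ≤ n) (hm2 : 2 ≤ m)
    (ha1 : a 1 + 1 < a 0) (hb1 : b 1 + 1 < b 0)
    (hn : n = a 0 + 1) (hm : m = b 0 + 1)
    (heq : (∏ i ∈ Finset.range (a 0), (1 - RatFunc.X ^ (i + 1))) /
             (∏ i ∈ Finset.Ico 1 n, (1 - RatFunc.X ^ (a i + 1))) =
           (∏ i ∈ Finset.range (b 0), ((1 : RatFunc ℚ) - RatFunc.X ^ (i + 1))) /
             (∏ i ∈ Finset.Ico 1 m, (1 - RatFunc.X ^ (b i + 1)))) :
    n = m ∧ ∀ i < n, a i = b i :=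
  eq_of_ratfunc_eq_general n m a b ha hb ha1 hb1 hn hm heq
end

section
/- Contracting the unique edge at a root with a single child preserves the plucking polynomial: if the root r of a rooted tree T has exactly one child, and T' is the tree obtained by contracting the edge from r to its child, then Q(T) = Q(T'). -/
open Finset

/-- The constant coefficient of `1 + X + ⋯ + X^n` is `1`. -/
theorem qnum_succ_ne_zero (n : ℕ) : qnum (n + 1) ≠ 0 := by
  have hpoly : qnum (n + 1) =
      algebraMap (Polynomial ℚ) (RatFunc ℚ) (∑ i ∈ range (n + 1), Polynomial.X ^ i) := by
    simp [qnum, RatFunc.algebraMap_X]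
  rw [hpoly, ne_eq, FaithfulSMul.algebraMap_eq_zero_iff]
  intro h
  simpa [Polynomial.coeff_X_pow] using congrArg (Polynomial.coeff · 0) h

theorem qfact_succ (n : ℕ) : qfact (n + 1) = qnum (n + 1) * qfact n := by
  rw [qfact, qfact, prod_range_succ, mul_comm]

namespace PTree

theorem edges_node_singleton (t : PTree) : edges (node [t]) = edges t + 1 := by
  simp [edges]

theorem ND_node_singleton (t : PTree) : ND (node [t]) = edges t ::ₘ ND t := by
  simp [ND]

end PTree

open PTree in
/-- Destabilization: if the root of `T` has exactly one child, contracting the root edge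
preserves the plucking polynomial. -/
theorem Q_destabilization (t : PTree) : Q (node [t]) = Q t := by
  rw [Q, Q, edges_node_singleton, ND_node_singleton, Multiset.map_cons, Multiset.prod_cons,
    qfact_succ, mul_div_mul_left _ _ (qnum_succ_ne_zero (edges t))]
end
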